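/- arXiv:2205.13973 — 8 statements merged into one kernel-verified Lean document; each statement's English description precedes it below -/
import Mathlib

section
/- Let a be a real number. The four vectors p0=(a,0,1,1), p1=(1,a-1,-1,1), p2=(1,-1,a+1,0), p3=(2,1,-1,a) in ℝ⁴ all lie in a common 2-dimensional linear subspace if and only if a² = 3. -/
theorem cyrenaic_subperiods_common_plane (a : ℝ) :
    (∃ E : Submodule ℝ (Fin 4 → ℝ), Module.finrank ℝ E = 2 ∧
      (![a, 0, 1, 1] : Fin 4 → ℝ) ∈ E ∧
      (![1, a - 1, -1, 1] : Fin 4 → ℝ) ∈ E ∧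
      (![1, -1, a + 1, 0] : Fin 4 → ℝ) ∈ E ∧
      (![2, 1, -1, a] : Fin 4 → ℝ) ∈ E) ↔ a ^ 2 = 3 := by
  set p0 : Fin 4 → ℝ := ![a, 0, 1, 1] with hp0
  set p1 : Fin 4 → ℝ := ![1, a - 1, -1, 1] with hp1
  set p2 : Fin 4 → ℝ := ![1, -1, a + 1, 0] with hp2
  set p3 : Fin 4 → ℝ := ![2, 1, -1, a] with hp3
  have hli : LinearIndependent ℝ ![p0, p1] := by
    rw [LinearIndependent.pair_iff]
    intro s t h
    have h2 := congrFun h 2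
    have h3 := congrFun h 3
    simp [hp0, hp1] at h2 h3
    constructor <;> linarith
  have hrange : Set.range ![p0, p1] = {p0, p1} := by
    ext x
    simp [Fin.exists_fin_two, eq_comm]
    tauto
  have hfr : Module.finrank ℝ (Submodule.span ℝ ({p0, p1} : Set (Fin 4 → ℝ))) = 2 := by
    rw [← hrange]
    rw [finrank_span_eq_card hli]
    simp
  constructor
  · rintro ⟨E, hE, h0, h1, h2, h3⟩
    have hle : Submodule.span ℝ ({p0, p1} : Set (Fin 4 → ℝ)) ≤ E := by
      rw [Submodule.span_le]
      rintro x (rfl | rfl) <;> assumption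
    have heq : Submodule.span ℝ ({p0, p1} : Set (Fin 4 → ℝ)) = E :=
      Submodule.eq_of_le_of_finrank_eq hle (by rw [hfr, hE])
    rw [← heq] at h2
    obtain ⟨c, d, hcd⟩ := Submodule.mem_span_pair.1 h2
    have e1 := congrFun hcd 1
    have e2 := congrFun hcd 2
    have e3 := congrFun hcd 3
    simp [hp0, hp1, hp2] at e1 e2 e3
    have hd : d = -(a + 1) / 2 := by linarith
    rw [hd] at e1
    linear_combination (-2 : ℝ) * e1
  · intro ha
    refine ⟨Submodule.span ℝ ({p0, p1} : Set (Fin 4 → ℝ)), hfr, ?_, ?_, ?_, ?_⟩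
    · exact Submodule.subset_span (by simp)
    · exact Submodule.subset_span (by simp)
    · refine Submodule.mem_span_pair.2 ⟨(a + 1) / 2, -(a + 1) / 2, ?_⟩
      funext i
      fin_cases i <;> simp [hp0, hp1, hp2] <;> nlinarith [ha]
    · refine Submodule.mem_span_pair.2 ⟨(a - 1) / 2, (a + 1) / 2, ?_⟩
      funext i
      fin_cases i <;> simp [hp0, hp1, hp3] <;> nlinarith [ha]
end

section
/- Suppose E is a 2-dimensional linear subspace of ℝ⁴ containing four vectors of the form (x,0,1,1), (1,y,-1,1), (1,-1,z,0), (2,1,-1,w) for some real numbers x,y,z,w. Then x = √3 or x = -√3, and moreover y = x-1, z = x+1, w = x. -/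
theorem cyrenaic_slope_characterized_by_subperiods
    (E : Submodule ℝ (Fin 4 → ℝ)) (hE : Module.finrank ℝ E = 2)
    (x y z w : ℝ)
    (h0 : (![x, 0, 1, 1] : Fin 4 → ℝ) ∈ E)
    (h1 : (![1, y, -1, 1] : Fin 4 → ℝ) ∈ E)
    (h2 : (![1, -1, z, 0] : Fin 4 → ℝ) ∈ E)
    (h3 : (![2, 1, -1, w] : Fin 4 → ℝ) ∈ E) :
    (x = Real.sqrt 3 ∨ x = -Real.sqrt 3) ∧ y = x - 1 ∧ z = x + 1 ∧ w = x := by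
  set v0 : Fin 4 → ℝ := ![x, 0, 1, 1] with hv0
  set v1 : Fin 4 → ℝ := ![1, y, -1, 1] with hv1
  have hind : LinearIndependent ℝ ![v0, v1] := by
    rw [LinearIndependent.pair_iff]
    intro s t hst
    have e2 := congrFun hst 2
    have e3 := congrFun hst 3
    simp [hv0, hv1] at e2 e3
    constructor <;> linarith
  have hspan : Submodule.span ℝ {v0, v1} = E := by
    have hle : Submodule.span ℝ {v0, v1} ≤ E := by
      rw [Submodule.span_le]
      intro u hu
      rcases hu with h | h
      · subst h; exact h0
      · simp at h; subst h; exact h1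
    refine Submodule.eq_of_le_of_finrank_le hle ?_
    rw [hE]
    have : Set.range ![v0, v1] = {v0, v1} := by
      simp [Set.range_subset_iff]
      ext u; simp [Fin.exists_fin_two]; tauto
    rw [← this, finrank_span_eq_card hind]
    simp
  rw [← hspan] at h2 h3
  rw [Submodule.mem_span_pair] at h2 h3
  obtain ⟨a, b, hab⟩ := h2
  obtain ⟨c, d, hcd⟩ := h3
  have a0 := congrFun hab 0
  have a1 := congrFun hab 1
  have a2 := congrFun hab 2
  have a3 := congrFun hab 3
  have c0 := congrFun hcd 0
  have c1 := congrFun hcd 1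
  have c2 := congrFun hcd 2
  have c3 := congrFun hcd 3
  simp [hv0, hv1] at a0 a1 a2 a3 c0 c1 c2 c3
  clear hab hcd hind hspan h0 h1 hv0 hv1 hE
  clear v0 v1 E
  -- a x + b = 1, b y = -1, a - b = z, a + b = 0
  -- c x + d = 2, d y = 1, c - d = -1, c + d = w
  have hb : b = -a := by linarith
  have ha1 : a * (x - 1) = 1 := by nlinarith [a0, hb]
  have hd : d = c + 1 := by linarith
  have hc1 : c * (x + 1) = 1 := by nlinarith [c0, hd]
  have hay : a * y = 1 := by rw [hb] at a1; linarith
  have hy : y = x - 1 := by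
    have ha : a ≠ 0 := by intro h; rw [h] at ha1; simp at ha1
    have := mul_left_cancel₀ ha (ha1.trans hay.symm)
    linarith
  have hcy : (c + 1) * y = 1 := by rw [hd] at c1; linarith
  have hc : c = (x - 1) / 2 := by
    rw [hy] at hcy; nlinarith [hc1, hcy]
  have hx2 : x * x = 3 := by
    rw [hc] at hc1; nlinarith
  have hxne : x - 1 ≠ 0 := by intro h; nlinarith
  have hz : z = x + 1 := by
    have hz0 : z = 2 * a := by linarith
    have hz1 : z * (x - 1) = (x + 1) * (x - 1) := by
      linear_combination 2 * ha1 + (x - 1) * hz0 - hx2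
    exact mul_right_cancel₀ hxne hz1
  have hw : w = x := by
    have : c + d = w := by linarith
    rw [hd, hc] at this; linarith
  refine ⟨?_, hy, hz, hw⟩
  have h3' : Real.sqrt 3 * Real.sqrt 3 = 3 := Real.mul_self_sqrt (by norm_num)
  have : x * x = Real.sqrt 3 * Real.sqrt 3 := by rw [h3', hx2]
  exact mul_self_eq_mul_self_iff.mp this
end

section
/- Let a = √3 and let M be the 4×4 real matrix (1/6)·[[3, -a, -a, -2a], [0, a+3, a, -a], [-a, a, -a+3, a], [-a, -a, 0, 3]]. Then M has rank 2, and the 2×4 matrix A = (1/2)·[[2, 0, a+1, a-1], [0, 2, -a-1, a+1]] satisfies A·M = 0 and has rank 2; consequently the rows of A span the left kernel of M. -/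
theorem cyrenaic_fine_projection_kernel :
    let a : ℝ := Real.sqrt 3
    let M : Matrix (Fin 4) (Fin 4) ℝ :=
      (1 / 6 : ℝ) • !![3, -a, -a, -2 * a;
                        0, a + 3, a, -a;
                        -a, a, -a + 3, a;
                        -a, -a, 0, 3]
    let A : Matrix (Fin 2) (Fin 4) ℝ :=
      (1 / 2 : ℝ) • !![2, 0, a + 1, a - 1;
                        0, 2, -a - 1, a + 1]
    M.rank = 2 ∧ A * M = 0 ∧ A.rank = 2 ∧
      ∀ v : Fin 4 → ℝ, Matrix.vecMul v M = 0 ↔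
        v ∈ Submodule.span ℝ ({A 0, A 1} : Set (Fin 4 → ℝ)) := by
  intro a M A
  have ha : a ^ 2 = 3 := Real.sq_sqrt (by norm_num)
  -- A * M = 0
  have hAM : A * M = 0 := by
    ext i j
    fin_cases i <;> fin_cases j <;>
      simp [A, M, Matrix.mul_apply, Fin.sum_univ_four,
        Matrix.cons_val_zero, Matrix.cons_val_one, Matrix.head_cons,
        Matrix.cons_val_two, Matrix.tail_cons, Matrix.cons_val_three,
        Matrix.head_fin_const, Matrix.vecHead, Matrix.vecTail]
    all_goals linarith [ha]
  -- kernel characterization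
  have hker : ∀ v : Fin 4 → ℝ, Matrix.vecMul v M = 0 ↔
      v ∈ Submodule.span ℝ ({A 0, A 1} : Set (Fin 4 → ℝ)) := by
    intro v
    constructor
    · intro h
      have h0 := congrFun h 0
      have h2 := congrFun h 2
      simp [M, Matrix.vecMul, dotProduct, Fin.sum_univ_four,
        Matrix.cons_val_zero, Matrix.cons_val_one, Matrix.head_cons,
        Matrix.cons_val_two, Matrix.tail_cons, Matrix.cons_val_three,
        Matrix.head_fin_const, Matrix.vecHead, Matrix.vecTail] at h0 h2
      rw [Submodule.mem_span_pair]
      refine ⟨v 0, v 1, funext fun j => ?_⟩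
      fin_cases j
      · simp [A]
      · simp [A]
      · simp [A]
        linear_combination (-(3+a)) * h2 + (-(v 0 - v 1 + v 2)/6) * ha
      · simp [A]
        linear_combination (2*a) * h0 + (3+a) * h2 +
          (v 3/3 + v 0/6 - v 1/6 + v 2/2) * ha
    · intro h
      rw [Submodule.mem_span_pair] at h
      obtain ⟨c, d, rfl⟩ := h
      have hrow : ∀ i : Fin 2, Matrix.vecMul (A i) M = 0 := by
        intro i
        funext j
        have := congrFun (congrFun hAM i) j
        simpa [Matrix.mul_apply, Matrix.vecMul, dotProduct] using this
      rw [Matrix.add_vecMul, Matrix.smul_vecMul, Matrix.smul_vecMul,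
        hrow 0, hrow 1]
      simp
  -- linear independence of the rows of A
  have hli : LinearIndependent ℝ ![A 0, A 1] := by
    rw [LinearIndependent.pair_iff]
    intro s t hst
    have h0 := congrFun hst 0
    have h1 := congrFun hst 1
    simp [A] at h0 h1
    exact ⟨h0, h1⟩
  have hspan2 : Module.finrank ℝ
      (Submodule.span ℝ ({A 0, A 1} : Set (Fin 4 → ℝ))) = 2 := by
    have h := finrank_span_eq_card hli
    have hr : Set.range ![A 0, A 1] = {A 0, A 1} := by
      simp [Matrix.range_cons, Set.pair_comm]
    rw [hr] at h
    simpa using h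
  -- rank M = 2
  have hMrank : M.rank = 2 := by
    rw [← Matrix.rank_transpose]
    have hkerT : LinearMap.ker (Matrix.mulVecLin M.transpose) =
        Submodule.span ℝ ({A 0, A 1} : Set (Fin 4 → ℝ)) := by
      ext v
      rw [LinearMap.mem_ker, Matrix.mulVecLin_apply, Matrix.mulVec_transpose]
      exact hker v
    have hrn := LinearMap.finrank_range_add_finrank_ker (Matrix.mulVecLin M.transpose)
    rw [hkerT, hspan2] at hrn
    simp only [Module.finrank_fintype_fun_eq_card, Fintype.card_fin] at hrn
    rw [Matrix.rank]
    omega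
  -- rank A = 2
  have hArank : A.rank = 2 := by
    refine le_antisymm ?_ ?_
    · simpa using A.rank_le_card_height
    · have hB : A * (!![1,0;0,1;0,0;0,0] : Matrix (Fin 4) (Fin 2) ℝ) = 1 := by
        ext i j
        fin_cases i <;> fin_cases j <;>
          simp [A, Matrix.mul_apply, Fin.sum_univ_four, Matrix.one_apply,
            Matrix.cons_val_zero, Matrix.cons_val_one, Matrix.head_cons,
            Matrix.cons_val_two, Matrix.tail_cons, Matrix.cons_val_three,
            Matrix.head_fin_const, Matrix.vecHead, Matrix.vecTail]
      have h := Matrix.rank_mul_le_left A (!![1,0;0,1;0,0;0,0] : Matrix (Fin 4) (Fin 2) ℝ)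
      rw [hB] at h
      simpa [Matrix.rank_one] using h
  exact ⟨hMrank, hAM, hArank, hker⟩
end

section
/- Let a = √3, let p0=(a,0,1,1), p1=(1,a-1,-1,1), p2=(1,-1,a+1,0), p3=(2,1,-1,a), and let A = (1/2)·[[2, 0, a+1, a-1], [0, 2, -a-1, a+1]] be a linear map ℝ⁴ → ℝ². Then for each i ∈ {0,1,2,3}, the vector A·p_i is a nonzero scalar multiple of A·e_i, where e_0,...,e_3 is the standard basis of ℝ⁴. -/
theorem cyrenaic_fine_projection_collinear :
    let a : ℝ := Real.sqrt 3
    let A : Matrix (Fin 2) (Fin 4) ℝ :=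
      (1 / 2 : ℝ) • !![2, 0, a + 1, a - 1;
                        0, 2, -a - 1, a + 1]
    let p : Fin 4 → (Fin 4 → ℝ) :=
      ![![a, 0, 1, 1], ![1, a - 1, -1, 1], ![1, -1, a + 1, 0], ![2, 1, -1, a]]
    ∀ i : Fin 4, ∃ c : ℝ, c ≠ 0 ∧
      A.mulVec (p i) = c • A.mulVec (Pi.single i 1) := by
  intro a A p
  have ha : a ^ 2 = 3 := Real.sq_sqrt (by norm_num)
  have hpos : (0:ℝ) < a := Real.sqrt_pos.mpr (by norm_num)
  intro i
  refine ⟨2 * a, by positivity, ?_⟩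
  funext j
  fin_cases i <;> fin_cases j <;>
    simp [A, p, Matrix.mulVec, dotProduct, Fin.sum_univ_four,
      Pi.single_apply, Matrix.smul_apply] <;> nlinarith [ha, hpos]
end

section
/- The 2-dimensional subspace E of ℝ⁴ spanned by u = (√3, 0, 1, 1) and v = (1, √3 − 1, −1, 1) contains no nonzero vector with all four coordinates rational. -/
theorem cyrenaic_slope_totally_irrational :
    ∀ w ∈ Submodule.span ℝ
      ({![Real.sqrt 3, 0, 1, 1], ![1, Real.sqrt 3 - 1, -1, 1]} : Set (Fin 4 → ℝ)),
      w ≠ 0 → ¬ (∀ i : Fin 4, ∃ q : ℚ, w i = (q : ℝ)) := by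
  have hirr : Irrational (Real.sqrt 3) := (Nat.prime_three).irrational_sqrt
  intro w hw hne hrat
  rw [Submodule.mem_span_pair] at hw
  obtain ⟨a, b, rfl⟩ := hw
  obtain ⟨q0, h0⟩ := hrat 0
  obtain ⟨q1, h1⟩ := hrat 1
  obtain ⟨q2, h2⟩ := hrat 2
  obtain ⟨q3, h3⟩ := hrat 3
  simp only [Pi.add_apply, Pi.smul_apply, smul_eq_mul, Matrix.cons_val_zero,
    Matrix.cons_val_one, Matrix.head_cons, Matrix.cons_val_two, Matrix.tail_cons,
    Matrix.cons_val_three] at h0 h1 h2 h3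
  -- h0 : a * √3 + b * 1 = q0, h1 : a * 0 + b * (√3 - 1) = q1
  -- h2 : a * 1 + b * (-1) = q2, h3 : a * 1 + b * 1 = q3
  have hb : b = ((q3 - q2) / 2 : ℚ) := by push_cast; linarith
  have ha : a = ((q3 + q2) / 2 : ℚ) := by push_cast; linarith
  have hb0 : b = 0 := by
    by_contra h
    set qb : ℚ := (q3 - q2) / 2 with hqb
    have hqb0 : (qb : ℝ) ≠ 0 := hb ▸ h
    have : Real.sqrt 3 = (((q1 + qb) / qb : ℚ) : ℝ) := by
      rw [Rat.cast_div, eq_div_iff hqb0, Rat.cast_add]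
      rw [hb] at h1
      linarith [h1]
    exact hirr ⟨_, this.symm⟩
  have ha0 : a = 0 := by
    by_contra h
    rw [hb0] at h0
    have : Real.sqrt 3 = ((q0 / ((q3 + q2) / 2) : ℚ) : ℝ) := by
      rw [Rat.cast_div, eq_div_iff (ha ▸ h : (((q3 + q2) / 2 : ℚ) : ℝ) ≠ 0), ← ha]
      linarith
    exact hirr ⟨_, this.symm⟩
  exact hne (by rw [ha0, hb0]; simp)
end

section
/- Let φ = (1+√5)/2 and ζ = exp(2πi/5), and let π(x₀,...,x₄) = Σ x_k ζ^k ∈ ℂ. Then |π(0,2,1,−1,−2)| = φ · |π(0,1,1,−1,−1)|, i.e. the projected ceil version of the Penrose subperiod p₁₄ is exactly φ times longer than its projected floor version. -/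
/-!
Write `P = ζ + ζ² - ζ³ - ζ⁴` for the projection of the floor vector. Since `ζ⁵ = 1`,
`(ζ + ζ⁴) P = ζ - ζ⁴`, which is exactly the projection of the difference `(0, 1, 0, 0, -1)`
of the ceil and floor vectors; hence the ceil vector projects to `(1 + ζ + ζ⁴) P`.
The factor `1 + ζ + ζ⁴ = 1 + 2 cos (2π/5)` is real and equals `φ`.
-/

open Real

theorem Real.cos_two_pi_div_five : cos (2 * π / 5) = (√5 - 1) / 4 := by
  have h5 : √5 ^ 2 = 5 := sq_sqrt (by norm_num)
  rw [show 2 * π / 5 = 2 * (π / 5) by ring, cos_two_mul, cos_pi_div_five]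
  linear_combination h5 / 8

theorem ceil_proj_eq_mul_floor_proj {R : Type*} [CommRing R] {ζ : R} (hζ : ζ ^ 5 = 1) :
    2 * ζ + ζ ^ 2 - ζ ^ 3 - 2 * ζ ^ 4 = (1 + ζ + ζ ^ 4) * (ζ + ζ ^ 2 - ζ ^ 3 - ζ ^ 4) := by
  linear_combination (ζ ^ 3 + ζ ^ 2 - ζ) * hζ

theorem Complex.one_add_exp_add_exp_pow_four_eq_goldenRatio :
    1 + Complex.exp (2 * π * Complex.I / 5) + Complex.exp (2 * π * Complex.I / 5) ^ 4
      = goldenRatio := by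
  set ζ := Complex.exp (2 * π * Complex.I / 5) with hζ
  have hζ4 : ζ ^ 4 = ζ⁻¹ := eq_inv_of_mul_eq_one_left <| by
    rw [← pow_succ]; exact (Complex.isPrimitiveRoot_exp 5 (by norm_num)).pow_eq_one
  have hcos : ζ + ζ⁻¹ = 2 * (Real.cos (2 * π / 5) : ℂ) := by
    rw [Complex.ofReal_cos, Complex.two_cos, ← Complex.exp_neg, hζ]
    push_cast
    ring_nf
  rw [add_assoc, hζ4, hcos, cos_two_pi_div_five]
  push_cast
  ring

theorem penrose_ceil_floor_ratio :
    let φ : ℝ := (1 + Real.sqrt 5) / 2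
    let ζ : ℂ := Complex.exp (2 * Real.pi * Complex.I / 5)
    let proj : (Fin 5 → ℝ) → ℂ := fun x => ∑ k : Fin 5, (x k : ℂ) * ζ ^ (k : ℕ)
    ‖proj ![0, 2, 1, -1, -2]‖ = φ * ‖proj ![0, 1, 1, -1, -1]‖ := by
  intro φ ζ proj
  have hζ : ζ ^ 5 = 1 := (Complex.isPrimitiveRoot_exp 5 (by norm_num)).pow_eq_one
  have hproj : proj ![0, 2, 1, -1, -2] = (1 + ζ + ζ ^ 4) * proj ![0, 1, 1, -1, -1] := by
    simp only [proj, Fin.sum_univ_five, Fin.isValue, Fin.coe_ofNat_eq_mod, Nat.reduceMod,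
      Matrix.cons_val_zero, Matrix.cons_val_one, Matrix.cons_val, Complex.ofReal_zero,
      Complex.ofReal_one, Complex.ofReal_ofNat, Complex.ofReal_neg]
    linear_combination ceil_proj_eq_mul_floor_proj hζ
  rw [hproj, Complex.one_add_exp_add_exp_pow_four_eq_goldenRatio, norm_mul, Complex.norm_real,
    norm_of_nonneg goldenRatio_pos.le]
end

section
/- For every real s > 0, the plane E_s ⊂ ℝ⁴ spanned by u_s = (1, 2/s, 1, 0) and v_s = (0, 1, s, 1) contains vectors of the form (x, 1, 0, −1), (1, y, 1, 0), (0, 1, z, 1), and (−1, 0, 1, w) for some real numbers x, y, z, w (namely x = s, y = 2/s, z = s, w = 2/s). In particular, there are infinitely many distinct planes E_s sharing these same prescribed integer coordinates. -/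
private lemma vec_eq_of_coords {a b c d a' b' c' d' : ℝ}
    (h0 : a = a') (h1 : b = b') (h2 : c = c') (h3 : d = d') :
    (![a, b, c, d] : Fin 4 → ℝ) = ![a', b', c', d'] := by
  subst h0 h1 h2 h3; rfl

theorem beenker_slopes_share_subperiod_integers :
    (∀ s : ℝ, 0 < s →
      ∃ x y z w : ℝ,
        let E := Submodule.span ℝ
          ({![1, 2 / s, 1, 0], ![0, 1, s, 1]} : Set (Fin 4 → ℝ))
        x = s ∧ y = 2 / s ∧ z = s ∧ w = 2 / s ∧
        (![x, 1, 0, -1] : Fin 4 → ℝ) ∈ E ∧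
        (![1, y, 1, 0] : Fin 4 → ℝ) ∈ E ∧
        (![0, 1, z, 1] : Fin 4 → ℝ) ∈ E ∧
        (![-1, 0, 1, w] : Fin 4 → ℝ) ∈ E) ∧
    {E : Submodule ℝ (Fin 4 → ℝ) | ∃ s : ℝ, 0 < s ∧
      E = Submodule.span ℝ
        ({![1, 2 / s, 1, 0], ![0, 1, s, 1]} : Set (Fin 4 → ℝ))}.Infinite := by
  constructor
  · intro s hs
    refine ⟨s, 2 / s, s, 2 / s, rfl, rfl, rfl, rfl, ?_, ?_, ?_, ?_⟩
    · rw [Submodule.mem_span_pair]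
      refine ⟨s, -1, ?_⟩
      funext i
      fin_cases i <;>
        simp [Matrix.cons_val_zero, Matrix.cons_val_one, hs.ne'] <;>
        (try field_simp) <;> (try norm_num)
    · exact Submodule.subset_span (by simp)
    · exact Submodule.subset_span (by simp)
    · rw [Submodule.mem_span_pair]
      refine ⟨-1, 2 / s, ?_⟩
      funext i
      fin_cases i <;>
        simp [Matrix.cons_val_zero, Matrix.cons_val_one, hs.ne'] <;>
        (try field_simp) <;> (try norm_num)
  · have key : ∀ s t : ℝ, 0 < s → 0 < t →
        Submodule.span ℝ ({![1, 2 / s, 1, 0], ![0, 1, s, 1]} : Set (Fin 4 → ℝ)) =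
        Submodule.span ℝ ({![1, 2 / t, 1, 0], ![0, 1, t, 1]} : Set (Fin 4 → ℝ)) →
        s = t := by
      intro s t hs ht hE
      have hv : (![0, 1, s, 1] : Fin 4 → ℝ) ∈
          Submodule.span ℝ ({![1, 2 / t, 1, 0], ![0, 1, t, 1]} : Set (Fin 4 → ℝ)) := by
        rw [← hE]; exact Submodule.subset_span (by simp)
      rw [Submodule.mem_span_pair] at hv
      obtain ⟨a, b, hab⟩ := hv
      have h0 := congrFun hab 0
      have h2 := congrFun hab 2
      have h3 := congrFun hab 3
      simp [Matrix.cons_val_zero, Matrix.cons_val_one] at h0 h2 h3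
      have ha : a = 0 := by linarith
      have hb : b = 1 := by linarith
      rw [ha, hb] at h2
      linarith
    have : Set.InjOn (fun s : ℝ => Submodule.span ℝ
        ({![1, 2 / s, 1, 0], ![0, 1, s, 1]} : Set (Fin 4 → ℝ))) (Set.Ioi 0) := by
      intro s hs t ht h
      exact key s t hs ht h
    have h1 : (Set.Ioi (0:ℝ)).Infinite := Set.Ioi_infinite 0
    have h2 := h1.image this
    apply h2.mono
    intro E hE
    obtain ⟨s, hs, rfl⟩ := hE
    exact ⟨s, hs, rfl⟩
end

section
/- Let a = √3 and A = (1/2)·[[2, 0, a+1, a−1], [0, 2, −a−1, a+1]]. The restriction of the linear map A : ℝ⁴ → ℝ² to the plane E spanned by u = (a, 0, 1, 1) and v = (1, a−1, −1, 1) is a linear isomorphism onto ℝ². -/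
theorem cyrenaic_fine_projection_iso_on_slope :
    let a : ℝ := Real.sqrt 3
    let A : Matrix (Fin 2) (Fin 4) ℝ :=
      (1 / 2 : ℝ) • !![2, 0, a + 1, a - 1;
                        0, 2, -a - 1, a + 1]
    let E := Submodule.span ℝ
      ({![a, 0, 1, 1], ![1, a - 1, -1, 1]} : Set (Fin 4 → ℝ))
    (∀ w ∈ E, A.mulVec w = 0 → w = 0) ∧
    (∀ y : Fin 2 → ℝ, ∃ w ∈ E, A.mulVec w = y) := by
  intro a A E
  have ha : a ≠ 0 := by
    simp only [a]
    positivity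
  have hAu : A.mulVec ![a, 0, 1, 1] = ![2 * a, 0] := by
    funext i
    fin_cases i <;>
      simp [A, Matrix.mulVec, dotProduct, Fin.sum_univ_four] <;> ring
  have hAv : A.mulVec ![1, a - 1, -1, 1] = ![0, 2 * a] := by
    funext i
    fin_cases i <;>
      simp [A, Matrix.mulVec, dotProduct, Fin.sum_univ_four] <;> ring
  have hmem : ∀ c d : ℝ,
      A.mulVec (c • ![a, 0, 1, 1] + d • ![1, a - 1, -1, 1]) = ![2 * a * c, 2 * a * d] := by
    intro c d
    rw [Matrix.mulVec_add, Matrix.mulVec_smul, Matrix.mulVec_smul, hAu, hAv]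
    funext i
    fin_cases i <;> simp <;> ring
  constructor
  · intro w hw h0
    rw [Submodule.mem_span_pair] at hw
    obtain ⟨c, d, rfl⟩ := hw
    rw [hmem] at h0
    have hc : 2 * a * c = 0 := congrFun h0 0
    have hd : 2 * a * d = 0 := congrFun h0 1
    have hc' : c = 0 := by
      rcases mul_eq_zero.mp hc with h | h
      · exact absurd h (by simpa using ha)
      · exact h
    have hd' : d = 0 := by
      rcases mul_eq_zero.mp hd with h | h
      · exact absurd h (by simpa using ha)
      · exact h
    simp [hc', hd']
  · intro y
    refine ⟨(y 0 / (2 * a)) • ![a, 0, 1, 1] + (y 1 / (2 * a)) • ![1, a - 1, -1, 1],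
      Submodule.mem_span_pair.mpr ⟨_, _, rfl⟩, ?_⟩
    rw [hmem]
    funext i
    have h2a : (2 * a) ≠ 0 := by simpa using ha
    fin_cases i <;> simp <;> field_simp
end
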